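/- arXiv:2401.16060 — 3 statements merged into one kernel-verified Lean document; each statement's English description precedes it below -/
import Mathlib

section
/- Let A ⊆ A' be regular (closed densely defined) operators on a complex Hilbert space H. If the range of A is closed in H, then Γ_A + (ker A' × {0}) is a closed subspace of H ⊕ H. (Equivalently, the Cauchy data space C = γ(ker A' × {0}) is a closed subspace of the space of abstract boundary values β.) -/
/-!
Since `A ⊆ A'`, a point of `Γ_{A'}` whose second coordinate is `A x` differs from `(x, A x)` by
an element of `ker A' × {0}`. Hence `Γ_A + (ker A' × {0}) = Γ_{A'} ∩ (H × ran A)`, an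
intersection of two closed sets.
-/

theorem LinearPMap.graph_sup_inf_prod_bot_eq {R E F : Type*} [Ring R] [AddCommGroup E]
    [Module R E] [AddCommGroup F] [Module R F] {f g : E →ₗ.[R] F} (h : f ≤ g) :
    f.graph ⊔ (g.graph ⊓ (⊤ : Submodule R E).prod ⊥) =
      g.graph ⊓ (⊤ : Submodule R E).prod (LinearMap.range f.toFun) := by
  have hfg : f.graph ≤ g.graph := LinearPMap.le_graph_of_le h
  refine le_antisymm
    (sup_le (le_inf hfg ?_) (inf_le_inf_left _ (Submodule.prod_mono le_rfl bot_le))) ?_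
  · rintro p hp
    obtain ⟨x, -, hx⟩ := f.mem_graph_iff.mp hp
    exact ⟨Submodule.mem_top, x, hx⟩
  · rintro p ⟨hp, -, x, hx⟩
    have hxf : ((x : E), f x) ∈ f.graph := f.mem_graph x
    have hker : p - ((x : E), f x) ∈ g.graph ⊓ (⊤ : Submodule R E).prod ⊥ :=
      ⟨g.graph.sub_mem hp (hfg hxf), Submodule.mem_top, by simp [← hx]⟩
    simpa using Submodule.add_mem_sup hxf hker

theorem statement_3_general
    {H : Type*} [NormedAddCommGroup H] [InnerProductSpace ℂ H]
    (A A' : H →ₗ.[ℂ] H)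
    (hA'graph : IsClosed ((A'.graph : Submodule ℂ (H × H)) : Set (H × H)))
    (hle : A ≤ A')
    (hranA : IsClosed ((LinearMap.range A.toFun : Submodule ℂ H) : Set H)) :
    IsClosed
      ((A.graph ⊔ (A'.graph ⊓ (⊤ : Submodule ℂ H).prod (⊥ : Submodule ℂ H)) :
        Submodule ℂ (H × H)) : Set (H × H)) := by
  rw [LinearPMap.graph_sup_inf_prod_bot_eq hle, Submodule.coe_inf, Submodule.prod_coe]
  exact hA'graph.inter (isClosed_univ.prod hranA)

/-- let `A ⊆ A'` be regular (closed densely defined) operators on a complex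
Hilbert space `H`. If the range of `A` is closed, then `Γ_A + (ker A' × {0})` is a closed
subspace of `H × H` (equivalently, the Cauchy data space is closed in the space of
abstract boundary values). Here `ker A' × {0} = Γ_{A'} ∩ (H × {0})`. -/
theorem statement_3
    {H : Type*} [NormedAddCommGroup H] [InnerProductSpace ℂ H] [CompleteSpace H]
    (A A' : H →ₗ.[ℂ] H)
    (hAgraph : IsClosed ((A.graph : Submodule ℂ (H × H)) : Set (H × H)))
    (hAdense : Dense ((A.domain : Submodule ℂ H) : Set H))
    (hA'graph : IsClosed ((A'.graph : Submodule ℂ (H × H)) : Set (H × H)))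
    (hA'dense : Dense ((A'.domain : Submodule ℂ H) : Set H))
    (hle : A ≤ A')
    (hranA : IsClosed ((LinearMap.range A.toFun : Submodule ℂ H) : Set H)) :
    IsClosed
      ((A.graph ⊔ (A'.graph ⊓ (⊤ : Submodule ℂ H).prod (⊥ : Submodule ℂ H)) :
        Submodule ℂ (H × H)) : Set (H × H)) :=
  statement_3_general A A' hA'graph hle hranA
end

section
/- Let A ⊆ A' be regular (closed densely defined) operators on a complex Hilbert space H such that the range of A' is closed in H. If Γ_A + (ker A' × {0}) is a closed subspace of H ⊕ H (equivalently, dom A + ker A' is closed in dom A' with respect to the graph norm), then the range of A is also closed in H. -/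
/-!
The second coordinate `snd : Γ_{A'} → ran A'` is a continuous linear surjection between Banach
spaces, hence a quotient map by the open mapping theorem. The closed subspace
`S = Γ_A + (ker A' × {0})` of `Γ_{A'}` contains the kernel `ker A' × {0}` of this map, so it is
saturated and its image `snd S = ran A` is closed in `ran A'`, hence in `H`.
-/

section Banach

variable {𝕜 E F : Type*} [NontriviallyNormedField 𝕜]
  [NormedAddCommGroup E] [NormedSpace 𝕜 E] [CompleteSpace E]
  [NormedAddCommGroup F] [NormedSpace 𝕜 F] [CompleteSpace F]

namespace ContinuousLinearMap

theorem isClosed_map_of_surjective_of_ker_le (f : E →L[𝕜] F) (hf : Function.Surjective f)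
    {S : Submodule 𝕜 E} (hS : IsClosed (S : Set E)) (hker : (f : E →ₗ[𝕜] F).ker ≤ S) :
    IsClosed ((S.map (f : E →ₗ[𝕜] F) : Submodule 𝕜 F) : Set F) := by
  rw [← (f.isQuotientMap hf).isClosed_preimage]
  change IsClosed ((S.map (f : E →ₗ[𝕜] F)).comap (f : E →ₗ[𝕜] F) : Set E)
  rwa [Submodule.comap_map_eq_self hker]

theorem isClosed_map_of_inf_ker_le (f : E →L[𝕜] F) {G S : Submodule 𝕜 E}
    (hG : IsClosed (G : Set E)) (hfG : IsClosed ((G.map (f : E →ₗ[𝕜] F) : Submodule 𝕜 F) : Set F))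
    (hS : IsClosed (S : Set E)) (hSG : S ≤ G) (hker : G ⊓ (f : E →ₗ[𝕜] F).ker ≤ S) :
    IsClosed ((S.map (f : E →ₗ[𝕜] F) : Submodule 𝕜 F) : Set F) := by
  have := hG.completeSpace_coe
  have := hfG.completeSpace_coe
  let g : G →L[𝕜] G.map (f : E →ₗ[𝕜] F) :=
    (f.comp G.subtypeL).codRestrict _ fun x => ⟨x, x.2, rfl⟩
  have hg : Function.Surjective g := by
    rintro ⟨_, x, hx, rfl⟩
    exact ⟨⟨x, hx⟩, rfl⟩
  have hclosed := g.isClosed_map_of_surjective_of_ker_le hg (S := S.comap G.subtype)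
    (hS.preimage continuous_subtype_val) fun x hx => hker ⟨x.2, congrArg Subtype.val hx⟩
  have himage : ((S.map (f : E →ₗ[𝕜] F) : Submodule 𝕜 F) : Set F) =
      Subtype.val '' (g '' (Subtype.val ⁻¹' (S : Set E))) := by
    ext y
    constructor
    · rintro ⟨x, hx, rfl⟩
      exact ⟨g ⟨x, hSG hx⟩, ⟨⟨x, hSG hx⟩, hx, rfl⟩, rfl⟩
    · rintro ⟨_, ⟨x, hx, rfl⟩, rfl⟩
      exact ⟨x, hx, rfl⟩
  rw [Submodule.map_coe] at hclosed
  rw [himage]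
  exact hfG.isClosedEmbedding_subtypeVal.isClosedMap _ hclosed

end ContinuousLinearMap

end Banach

theorem LinearPMap.map_snd_graph_sup_of_le_prod_bot {R E F : Type*} [Ring R]
    [AddCommGroup E] [Module R E] [AddCommGroup F] [Module R F] (f : E →ₗ.[R] F)
    {K : Submodule R (E × F)} (hK : K ≤ (⊤ : Submodule R E).prod ⊥) :
    (f.graph ⊔ K).map (LinearMap.snd R E F) = LinearMap.range f.toFun := by
  have hK_snd : K.map (LinearMap.snd R E F) = ⊥ := by
    refine eq_bot_iff.2 ?_
    rintro _ ⟨x, hx, rfl⟩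
    exact (Submodule.mem_prod.1 (hK hx)).2
  rw [Submodule.map_sup, f.graph_map_snd_eq_range, hK_snd, sup_bot_eq]

theorem statement_4_general
    {H : Type*} [NormedAddCommGroup H] [InnerProductSpace ℂ H] [CompleteSpace H]
    (A A' : H →ₗ.[ℂ] H)
    (hA'graph : IsClosed ((A'.graph : Submodule ℂ (H × H)) : Set (H × H)))
    (hle : A ≤ A')
    (hranA' : IsClosed ((LinearMap.range A'.toFun : Submodule ℂ H) : Set H))
    (hsum : IsClosed
      ((A.graph ⊔ (A'.graph ⊓ (⊤ : Submodule ℂ H).prod (⊥ : Submodule ℂ H)) :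
        Submodule ℂ (H × H)) : Set (H × H))) :
    IsClosed ((LinearMap.range A.toFun : Submodule ℂ H) : Set H) := by
  have hle_graph : A.graph ⊔ (A'.graph ⊓ (⊤ : Submodule ℂ H).prod ⊥) ≤ A'.graph :=
    sup_le (LinearPMap.le_graph_of_le hle) inf_le_left
  have hker : A'.graph ⊓ (LinearMap.snd ℂ H H).ker ≤
      A.graph ⊔ (A'.graph ⊓ (⊤ : Submodule ℂ H).prod ⊥) :=
    le_sup_of_le_right <| inf_le_inf_left _ fun p hp => Submodule.mem_prod.2 ⟨trivial, hp⟩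
  rw [← A.map_snd_graph_sup_of_le_prod_bot inf_le_right]
  rw [← A'.graph_map_snd_eq_range] at hranA'
  exact (ContinuousLinearMap.snd ℂ H H).isClosed_map_of_inf_ker_le hA'graph hranA' hsum
    hle_graph hker

/-- let `A ⊆ A'` be regular (closed densely defined) operators on a complex
Hilbert space `H` such that the range of `A'` is closed. If `Γ_A + (ker A' × {0})` is
closed in `H × H` (equivalently, `dom A + ker A'` is closed in `dom A'` for the graph
norm), then the range of `A` is closed. Here `ker A' × {0} = Γ_{A'} ∩ (H × {0})`. -/
theorem statement_4
    {H : Type*} [NormedAddCommGroup H] [InnerProductSpace ℂ H] [CompleteSpace H]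
    (A A' : H →ₗ.[ℂ] H)
    (hAgraph : IsClosed ((A.graph : Submodule ℂ (H × H)) : Set (H × H)))
    (hAdense : Dense ((A.domain : Submodule ℂ H) : Set H))
    (hA'graph : IsClosed ((A'.graph : Submodule ℂ (H × H)) : Set (H × H)))
    (hA'dense : Dense ((A'.domain : Submodule ℂ H) : Set H))
    (hle : A ≤ A')
    (hranA' : IsClosed ((LinearMap.range A'.toFun : Submodule ℂ H) : Set H))
    (hsum : IsClosed
      ((A.graph ⊔ (A'.graph ⊓ (⊤ : Submodule ℂ H).prod (⊥ : Submodule ℂ H)) :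
        Submodule ℂ (H × H)) : Set (H × H))) :
    IsClosed ((LinearMap.range A.toFun : Submodule ℂ H) : Set H) :=
  statement_4_general A A' hA'graph hle hranA' hsum
end

section
/- Let (A,A') be a Fredholm extension pair on a complex Hilbert space H and let L be a closed subspace of β. Then the realization A_L is a Fredholm operator if and only if (L, C) is a Fredholm pair of subspaces of β. Similarly, if (A,A') is an invertible extension pair, then A_L maps its domain bijectively onto H if and only if (L, C) is a transversal pair of subspaces of β. -/
noncomputable section

variable {H : Type*} [NormedAddCommGroup H] [InnerProductSpace ℂ H] [CompleteSpace H]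

open Classical in
noncomputable def orthProj {W : Type*} [NormedAddCommGroup W] [InnerProductSpace ℂ W]
    (M : Submodule ℂ W) : W →L[ℂ] W :=
  if h : IsComplete (M : Set W) then
    haveI : CompleteSpace M := h.completeSpace_coe
    M.subtypeL.comp (M.orthogonalProjectionOnto)
  else 0

/-- The graph of a partially defined operator, as a subspace of the Hilbert space
`WithLp 2 (H × H)` (i.e. `H ⊕ H` with the Hilbert direct-sum structure). -/
def graphW (A : H →ₗ.[ℂ] H) : Submodule ℂ (WithLp 2 (H × H)) :=
  A.graph.map ((WithLp.linearEquiv 2 ℂ (H × H)).symm : (H × H) →ₗ[ℂ] WithLp 2 (H × H))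

/-- The space of abstract boundary values `β = Γ_{A'} ∩ Γ_A^⊥` of an extension pair. -/
def bdryW (A A' : H →ₗ.[ℂ] H) : Submodule ℂ (WithLp 2 (H × H)) :=
  graphW A' ⊓ (graphW A)ᗮ

/-- The subspace `ker A' × {0} = Γ_{A'} ∩ (H × {0})` of `H ⊕ H`. -/
def kerW (A' : H →ₗ.[ℂ] H) : Submodule ℂ (WithLp 2 (H × H)) :=
  graphW A' ⊓ (((⊤ : Submodule ℂ H).prod (⊥ : Submodule ℂ H)).map
    ((WithLp.linearEquiv 2 ℂ (H × H)).symm : (H × H) →ₗ[ℂ] WithLp 2 (H × H)))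

/-- The Cauchy data space `C = γ(ker A' × {0}) ⊆ β`. -/
def cauchyW (A A' : H →ₗ.[ℂ] H) : Submodule ℂ (WithLp 2 (H × H)) :=
  (kerW A').map ((orthProj (bdryW A A')) : WithLp 2 (H × H) →ₗ[ℂ] WithLp 2 (H × H))

/-- The domain `{x : (x, A'x) ∈ L + Γ_A}` of the realization. -/
def realizationDom (A : H →ₗ.[ℂ] H) (L : Submodule ℂ (WithLp 2 (H × H))) : Submodule ℂ H :=
  (L ⊔ graphW A).map
    ((LinearMap.fst ℂ H H).comp ((WithLp.linearEquiv 2 ℂ (H × H)) : WithLp 2 (H × H) →ₗ[ℂ] H × H))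

/-- The realization `A_L`: the restriction of `A'` to `{x ∈ dom A' : (x, A'x) ∈ L + Γ_A}`. -/
def realization (A A' : H →ₗ.[ℂ] H) (L : Submodule ℂ (WithLp 2 (H × H))) : H →ₗ.[ℂ] H :=
  A'.domRestrict (realizationDom A L)

def FredholmOp (B : H →ₗ.[ℂ] H) : Prop :=
  IsClosed ((LinearMap.range B.toFun : Submodule ℂ H) : Set H) ∧
  FiniteDimensional ℂ (LinearMap.ker B.toFun) ∧
  FiniteDimensional ℂ (H ⧸ LinearMap.range B.toFun)

def LowerSemiFredholmOp (B : H →ₗ.[ℂ] H) : Prop :=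
  IsClosed ((LinearMap.range B.toFun : Submodule ℂ H) : Set H) ∧
  FiniteDimensional ℂ (LinearMap.ker B.toFun)

def UpperSemiFredholmOp (B : H →ₗ.[ℂ] H) : Prop :=
  IsClosed ((LinearMap.range B.toFun : Submodule ℂ H) : Set H) ∧
  FiniteDimensional ℂ (H ⧸ LinearMap.range B.toFun)

/-- `(L, N)` is a Fredholm pair of subspaces of the subspace `β`. -/
def FredholmPairIn {W : Type*} [NormedAddCommGroup W] [InnerProductSpace ℂ W]
    (β L N : Submodule ℂ W) : Prop :=
  IsClosed ((L ⊔ N : Submodule ℂ W) : Set W) ∧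
  FiniteDimensional ℂ ↥(L ⊓ N) ∧
  FiniteDimensional ℂ (↥β ⧸ Submodule.comap β.subtype (L ⊔ N))

/-- `(L, N)` is a transversal pair of subspaces of the subspace `β`. -/
def TransversalPairIn {W : Type*} [NormedAddCommGroup W] [InnerProductSpace ℂ W]
    (β L N : Submodule ℂ W) : Prop :=
  L ⊓ N = ⊥ ∧ L ⊔ N = β

-- basic lemmas
theorem mem_graphW {A : H →ₗ.[ℂ] H} {z : WithLp 2 (H × H)} :
    z ∈ graphW A ↔ (WithLp.linearEquiv 2 ℂ (H × H)) z ∈ A.graph := by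
  rw [graphW, Submodule.mem_map_equiv, LinearEquiv.symm_symm]

theorem graphW_closed {A : H →ₗ.[ℂ] H} (hA : IsClosed ((A.graph : Submodule ℂ (H × H)) : Set (H × H))) :
    IsClosed ((graphW A : Submodule ℂ (WithLp 2 (H × H))) : Set (WithLp 2 (H × H))) := by
  have : ((graphW A : Submodule ℂ (WithLp 2 (H × H))) : Set (WithLp 2 (H × H))) =
      (WithLp.prodContinuousLinearEquiv 2 ℂ H H) ⁻¹' (A.graph : Set (H × H)) := by
    ext z
    simp only [Set.mem_preimage, SetLike.mem_coe, WithLp.prodContinuousLinearEquiv_apply]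
    rw [mem_graphW]
    rfl
  rw [this]
  exact hA.preimage (WithLp.prodContinuousLinearEquiv 2 ℂ H H).continuous

theorem graphW_mono {A A' : H →ₗ.[ℂ] H} (hle : A ≤ A') : graphW A ≤ graphW A' :=
  Submodule.map_mono (LinearPMap.le_graph_of_le hle)

theorem mem_kerW {A' : H →ₗ.[ℂ] H} {z : WithLp 2 (H × H)} :
    z ∈ kerW A' ↔ z ∈ graphW A' ∧ ((WithLp.linearEquiv 2 ℂ (H × H)) z).2 = 0 := by
  rw [kerW, Submodule.mem_inf, Submodule.mem_map_equiv, LinearEquiv.symm_symm,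
    Submodule.mem_prod]
  simp

theorem kerW_le {A' : H →ₗ.[ℂ] H} : kerW A' ≤ graphW A' := inf_le_left

theorem graphW_fst {A' : H →ₗ.[ℂ] H} {z : WithLp 2 (H × H)} (hz : z ∈ graphW A') :
    ∃ h : ((WithLp.linearEquiv 2 ℂ (H × H)) z).1 ∈ A'.domain,
      A' ⟨((WithLp.linearEquiv 2 ℂ (H × H)) z).1, h⟩ = ((WithLp.linearEquiv 2 ℂ (H × H)) z).2 := by
  rw [mem_graphW] at hz
  rw [LinearPMap.mem_graph_iff] at hz
  obtain ⟨y, hy1, hy2⟩ := hz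
  refine ⟨hy1 ▸ y.2, ?_⟩
  rw [← hy2]
  congr 1
  exact Subtype.ext hy1.symm

-- orthProj lemmas
theorem orthProj_eq {W : Type*} [NormedAddCommGroup W] [InnerProductSpace ℂ W]
    (M : Submodule ℂ W) (h : IsComplete (M : Set W)) (x : W) :
    haveI : CompleteSpace M := h.completeSpace_coe
    orthProj M x = (M.orthogonalProjectionOnto x : W) := by
  rw [orthProj, dif_pos h]
  rfl

theorem orthProj_mem {W : Type*} [NormedAddCommGroup W] [InnerProductSpace ℂ W]
    {M : Submodule ℂ W} (h : IsComplete (M : Set W)) (x : W) : orthProj M x ∈ M := by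
  haveI : CompleteSpace M := h.completeSpace_coe
  rw [orthProj_eq M h x]
  exact (M.orthogonalProjectionOnto x).2

theorem orthProj_eq_self {W : Type*} [NormedAddCommGroup W] [InnerProductSpace ℂ W]
    {M : Submodule ℂ W} (h : IsComplete (M : Set W)) {x : W} (hx : x ∈ M) :
    orthProj M x = x := by
  haveI : CompleteSpace M := h.completeSpace_coe
  rw [orthProj_eq M h x]
  exact Submodule.starProjection_eq_self_iff.mpr hx

theorem orthProj_eq_zero {W : Type*} [NormedAddCommGroup W] [InnerProductSpace ℂ W]
    {M : Submodule ℂ W} (h : IsComplete (M : Set W)) {x : W} (hx : x ∈ Mᗮ) :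
    orthProj M x = 0 := by
  haveI : CompleteSpace M := h.completeSpace_coe
  rw [orthProj_eq M h x]
  rw [Submodule.orthogonalProjectionOnto_apply_of_mem_orthogonal hx]
  simp

theorem sub_orthProj_mem {W : Type*} [NormedAddCommGroup W] [InnerProductSpace ℂ W]
    {M : Submodule ℂ W} (h : IsComplete (M : Set W)) (x : W) : x - orthProj M x ∈ Mᗮ := by
  haveI : CompleteSpace M := h.completeSpace_coe
  rw [orthProj_eq M h x]
  exact Submodule.sub_starProjection_mem_orthogonal x

-- bdry lemmas
theorem bdryW_closed {A A' : H →ₗ.[ℂ] H}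
    (hA'g : IsClosed ((A'.graph : Submodule ℂ (H × H)) : Set (H × H))) :
    IsClosed ((bdryW A A' : Submodule ℂ (WithLp 2 (H × H))) : Set (WithLp 2 (H × H))) := by
  rw [bdryW, Submodule.coe_inf]
  exact (graphW_closed hA'g).inter (Submodule.isClosed_orthogonal _)

theorem bdryW_le {A A' : H →ₗ.[ℂ] H} : bdryW A A' ≤ graphW A' := inf_le_left

theorem graphW_le_orthogonal_bdry (A A' : H →ₗ.[ℂ] H) : graphW A ≤ (bdryW A A')ᗮ :=
  le_trans (Submodule.le_orthogonal_orthogonal (graphW A)) (Submodule.orthogonal_le inf_le_right)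

theorem proj_decomp {A A' : H →ₗ.[ℂ] H}
    (hAg : IsClosed ((A.graph : Submodule ℂ (H × H)) : Set (H × H)))
    (hA'g : IsClosed ((A'.graph : Submodule ℂ (H × H)) : Set (H × H)))
    (hle : A ≤ A') {z : WithLp 2 (H × H)} (hz : z ∈ graphW A') :
    orthProj (bdryW A A') z ∈ bdryW A A' ∧ z - orthProj (bdryW A A') z ∈ graphW A := by
  have hΓ : IsComplete ((graphW A : Submodule ℂ (WithLp 2 (H × H))) : Set (WithLp 2 (H × H))) :=
    (graphW_closed hAg).isComplete
  have hβ : IsComplete ((bdryW A A' : Submodule ℂ (WithLp 2 (H × H))) : Set (WithLp 2 (H × H))) :=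
    (bdryW_closed hA'g).isComplete
  set g := orthProj (graphW A) z with hgdef
  have hg : g ∈ graphW A := orthProj_mem hΓ z
  have hzg : z - g ∈ (graphW A)ᗮ := sub_orthProj_mem hΓ z
  have hzgβ : z - g ∈ bdryW A A' :=
    Submodule.mem_inf.mpr ⟨Submodule.sub_mem _ hz (graphW_mono hle hg), hzg⟩
  have h1 : orthProj (bdryW A A') z = z - g := by
    have hzdecomp : z = (z - g) + g := by abel
    conv_lhs => rw [hzdecomp]
    rw [map_add, orthProj_eq_self hβ hzgβ,
      orthProj_eq_zero hβ (graphW_le_orthogonal_bdry A A' hg)]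
    abel
  constructor
  · rw [h1]; exact hzgβ
  · rw [h1]
    have : z - (z - g) = g := by abel
    rw [this]
    exact hg

theorem mem_graphW_of_proj_eq_zero {A A' : H →ₗ.[ℂ] H}
    (hAg : IsClosed ((A.graph : Submodule ℂ (H × H)) : Set (H × H)))
    (hA'g : IsClosed ((A'.graph : Submodule ℂ (H × H)) : Set (H × H)))
    (hle : A ≤ A') {z : WithLp 2 (H × H)} (hz : z ∈ graphW A')
    (h0 : orthProj (bdryW A A') z = 0) : z ∈ graphW A := by
  have := (proj_decomp hAg hA'g hle hz).2
  rwa [h0, sub_zero] at this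

theorem cauchyW_le_bdryW {A A' : H →ₗ.[ℂ] H}
    (hAg : IsClosed ((A.graph : Submodule ℂ (H × H)) : Set (H × H)))
    (hA'g : IsClosed ((A'.graph : Submodule ℂ (H × H)) : Set (H × H)))
    (hle : A ≤ A') : cauchyW A A' ≤ bdryW A A' := by
  intro c hc
  obtain ⟨k, hk, rfl⟩ := Submodule.mem_map.mp hc
  exact (proj_decomp hAg hA'g hle (kerW_le hk)).1

theorem sup_le_graphW {A A' : H →ₗ.[ℂ] H} (hle : A ≤ A') {L : Submodule ℂ (WithLp 2 (H × H))}
    (hLβ : L ≤ bdryW A A') : L ⊔ graphW A ≤ graphW A' :=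
  sup_le (hLβ.trans bdryW_le) (graphW_mono hle)

theorem graph_realization {A A' : H →ₗ.[ℂ] H} (hle : A ≤ A') {L : Submodule ℂ (WithLp 2 (H × H))}
    (hLβ : L ≤ bdryW A A') :
    (realization A A' L).graph =
      (L ⊔ graphW A).map ((WithLp.linearEquiv 2 ℂ (H × H)) : WithLp 2 (H × H) →ₗ[ℂ] H × H) := by
  apply le_antisymm
  · rintro w hw
    rw [LinearPMap.mem_graph_iff] at hw
    obtain ⟨v, hv1, hv2⟩ := hw
    have hvD : (v : H) ∈ realizationDom A L := (Submodule.mem_inf.mp v.2).1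
    obtain ⟨z, hz, hz1⟩ := hvD
    have hzΓ' : z ∈ graphW A' := sup_le_graphW hle hLβ hz
    obtain ⟨hd, heq⟩ := graphW_fst hzΓ'
    refine Submodule.mem_map.mpr ⟨z, hz, ?_⟩
    have hval : realization A A' L v = A' ⟨(v : H), (Submodule.mem_inf.mp v.2).2⟩ :=
      LinearPMap.domRestrict_apply rfl
    have hv1' : ((WithLp.linearEquiv 2 ℂ (H × H)) z).1 = (v : H) := hz1
    have hA'eq : A' ⟨(v : H), (Submodule.mem_inf.mp v.2).2⟩
        = A' ⟨((WithLp.linearEquiv 2 ℂ (H × H)) z).1, hd⟩ := by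
      congr 1
      exact Subtype.ext hv1'.symm
    have : (WithLp.linearEquiv 2 ℂ (H × H)) z = w := by
      apply Prod.ext
      · rw [hv1']; exact hv1
      · exact heq.symm.trans (hA'eq.symm.trans (hval.symm.trans hv2))
    exact this
  · rintro w ⟨z, hz, rfl⟩
    have hzΓ' : z ∈ graphW A' := sup_le_graphW hle hLβ hz
    obtain ⟨hd, heq⟩ := graphW_fst hzΓ'
    rw [LinearPMap.mem_graph_iff]
    refine ⟨⟨((WithLp.linearEquiv 2 ℂ (H × H)) z).1,
      Submodule.mem_inf.mpr ⟨⟨z, hz, rfl⟩, hd⟩⟩, rfl, ?_⟩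
    have hval : realization A A' L ⟨((WithLp.linearEquiv 2 ℂ (H × H)) z).1,
        Submodule.mem_inf.mpr ⟨⟨z, hz, rfl⟩, hd⟩⟩
        = A' ⟨((WithLp.linearEquiv 2 ℂ (H × H)) z).1, hd⟩ :=
      LinearPMap.domRestrict_apply rfl
    rw [hval, heq]
    rfl

theorem mem_graph_realizationW {A A' : H →ₗ.[ℂ] H} (hle : A ≤ A')
    {L : Submodule ℂ (WithLp 2 (H × H))} (hLβ : L ≤ bdryW A A')
    {z : WithLp 2 (H × H)} :
    (WithLp.linearEquiv 2 ℂ (H × H)) z ∈ (realization A A' L).graph ↔ z ∈ L ⊔ graphW A := by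
  rw [graph_realization hle hLβ]
  constructor
  · rintro ⟨z', hz', hz'eq⟩
    have : z' = z := (WithLp.linearEquiv 2 ℂ (H × H)).injective hz'eq
    rwa [← this]
  · intro hz
    exact ⟨z, hz, rfl⟩

theorem range_realization {A A' : H →ₗ.[ℂ] H} (hle : A ≤ A')
    {L : Submodule ℂ (WithLp 2 (H × H))} (hLβ : L ≤ bdryW A A') :
    LinearMap.range (realization A A' L).toFun =
      (L ⊔ graphW A).map ((LinearMap.snd ℂ H H).comp
        ((WithLp.linearEquiv 2 ℂ (H × H)) : WithLp 2 (H × H) →ₗ[ℂ] H × H)) := by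
  ext y
  constructor
  · rintro ⟨v, rfl⟩
    have hmem := LinearPMap.mem_graph (realization A A' L) v
    rw [graph_realization hle hLβ] at hmem
    obtain ⟨z, hz, hez⟩ := hmem
    exact ⟨z, hz, congrArg Prod.snd hez⟩
  · rintro ⟨z, hz, rfl⟩
    have : (WithLp.linearEquiv 2 ℂ (H × H)) z ∈ (realization A A' L).graph :=
      (mem_graph_realizationW hle hLβ).mpr hz
    rw [LinearPMap.mem_graph_iff] at this
    obtain ⟨v, hv1, hv2⟩ := this
    exact ⟨v, hv2⟩

/-- The map sending an element of the kernel of the realization to `W`. -/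
def kerMap (A A' : H →ₗ.[ℂ] H) (L : Submodule ℂ (WithLp 2 (H × H))) :
    ↥(LinearMap.ker (realization A A' L).toFun) →ₗ[ℂ] WithLp 2 (H × H) :=
  ((WithLp.linearEquiv 2 ℂ (H × H)).symm : (H × H) →ₗ[ℂ] WithLp 2 (H × H)) ∘ₗ
    (LinearMap.inl ℂ H H) ∘ₗ (realization A A' L).domain.subtype ∘ₗ
      (LinearMap.ker (realization A A' L).toFun).subtype

theorem kerMap_injective (A A' : H →ₗ.[ℂ] H) (L : Submodule ℂ (WithLp 2 (H × H))) :
    Function.Injective (kerMap A A' L) := by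
  intro a b hab
  simp only [kerMap, LinearMap.comp_apply] at hab
  have h1 := (WithLp.linearEquiv 2 ℂ (H × H)).symm.injective hab
  have h2 := congrArg Prod.fst h1
  exact Subtype.ext (Subtype.ext h2)

theorem kerMap_range {A A' : H →ₗ.[ℂ] H} (hle : A ≤ A')
    {L : Submodule ℂ (WithLp 2 (H × H))} (hLβ : L ≤ bdryW A A') :
    LinearMap.range (kerMap A A' L) = (L ⊔ graphW A) ⊓ kerW A' := by
  ext z
  constructor
  · rintro ⟨v, rfl⟩
    have hv0 : (realization A A' L) v.1 = 0 := v.2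
    have hmem := LinearPMap.mem_graph (realization A A' L) v.1
    rw [hv0] at hmem
    have hz : (kerMap A A' L v) = (WithLp.linearEquiv 2 ℂ (H × H)).symm ((v.1 : H), 0) := rfl
    have hS : kerMap A A' L v ∈ L ⊔ graphW A := by
      rw [← mem_graph_realizationW hle hLβ, hz, LinearEquiv.apply_symm_apply]
      exact hmem
    refine Submodule.mem_inf.mpr ⟨hS, mem_kerW.mpr ⟨sup_le_graphW hle hLβ hS, ?_⟩⟩
    rw [hz, LinearEquiv.apply_symm_apply]
  · intro hz
    have hzS : z ∈ L ⊔ graphW A := (Submodule.mem_inf.mp hz).1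
    have hzK := (Submodule.mem_inf.mp hz).2
    have hz2 : ((WithLp.linearEquiv 2 ℂ (H × H)) z).2 = 0 := (mem_kerW.mp hzK).2
    have : (WithLp.linearEquiv 2 ℂ (H × H)) z ∈ (realization A A' L).graph :=
      (mem_graph_realizationW hle hLβ).mpr hzS
    rw [LinearPMap.mem_graph_iff] at this
    obtain ⟨v, hv1, hv2⟩ := this
    have hvker : v ∈ LinearMap.ker (realization A A' L).toFun := by
      rw [LinearMap.mem_ker]
      rw [hz2] at hv2
      exact hv2
    refine ⟨⟨v, hvker⟩, ?_⟩
    have : kerMap A A' L ⟨v, hvker⟩ = (WithLp.linearEquiv 2 ℂ (H × H)).symm ((v : H), 0) := rfl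
    rw [this, hv1, ← hz2]
    exact (WithLp.linearEquiv 2 ℂ (H × H)).symm_apply_apply z

/-- The map sending an element of `ker A` to `W`. -/
def kerAMap (A : H →ₗ.[ℂ] H) : ↥(LinearMap.ker A.toFun) →ₗ[ℂ] WithLp 2 (H × H) :=
  ((WithLp.linearEquiv 2 ℂ (H × H)).symm : (H × H) →ₗ[ℂ] WithLp 2 (H × H)) ∘ₗ
    (LinearMap.inl ℂ H H) ∘ₗ A.domain.subtype ∘ₗ (LinearMap.ker A.toFun).subtype

theorem kerAMap_injective (A : H →ₗ.[ℂ] H) : Function.Injective (kerAMap A) := by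
  intro a b hab
  simp only [kerAMap, LinearMap.comp_apply] at hab
  have h1 := (WithLp.linearEquiv 2 ℂ (H × H)).symm.injective hab
  exact Subtype.ext (Subtype.ext (congrArg Prod.fst h1))

theorem kerAMap_range {A A' : H →ₗ.[ℂ] H} (hle : A ≤ A') :
    LinearMap.range (kerAMap A) = graphW A ⊓ kerW A' := by
  ext z
  constructor
  · rintro ⟨v, rfl⟩
    have hv0 : A v.1 = 0 := v.2
    have hmem := LinearPMap.mem_graph A v.1
    rw [hv0] at hmem
    have hz : (kerAMap A v) = (WithLp.linearEquiv 2 ℂ (H × H)).symm ((v.1 : H), 0) := rfl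
    have hΓ : kerAMap A v ∈ graphW A := by
      rw [mem_graphW, hz, LinearEquiv.apply_symm_apply]
      exact hmem
    refine Submodule.mem_inf.mpr ⟨hΓ, mem_kerW.mpr ⟨graphW_mono hle hΓ, ?_⟩⟩
    rw [hz, LinearEquiv.apply_symm_apply]
  · intro hz
    have hzΓ : z ∈ graphW A := (Submodule.mem_inf.mp hz).1
    have hz2 : ((WithLp.linearEquiv 2 ℂ (H × H)) z).2 = 0 :=
      (mem_kerW.mp (Submodule.mem_inf.mp hz).2).2
    have := mem_graphW.mp hzΓ
    rw [LinearPMap.mem_graph_iff] at this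
    obtain ⟨v, hv1, hv2⟩ := this
    have hvker : v ∈ LinearMap.ker A.toFun := by
      rw [LinearMap.mem_ker]
      rw [hz2] at hv2
      exact hv2
    refine ⟨⟨v, hvker⟩, ?_⟩
    have : kerAMap A ⟨v, hvker⟩ = (WithLp.linearEquiv 2 ℂ (H × H)).symm ((v : H), 0) := rfl
    rw [this, hv1, ← hz2]
    exact (WithLp.linearEquiv 2 ℂ (H × H)).symm_apply_apply z

theorem proj_inf_kerW {A A' : H →ₗ.[ℂ] H}
    (hAg : IsClosed ((A.graph : Submodule ℂ (H × H)) : Set (H × H)))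
    (hA'g : IsClosed ((A'.graph : Submodule ℂ (H × H)) : Set (H × H)))
    (hle : A ≤ A') {L : Submodule ℂ (WithLp 2 (H × H))} (hLβ : L ≤ bdryW A A') :
    ((L ⊔ graphW A) ⊓ kerW A').map ((orthProj (bdryW A A')) : WithLp 2 (H × H) →ₗ[ℂ] WithLp 2 (H × H)) = L ⊓ cauchyW A A' := by
  have hβ : IsComplete ((bdryW A A' : Submodule ℂ (WithLp 2 (H × H)))
      : Set (WithLp 2 (H × H))) := (bdryW_closed hA'g).isComplete
  ext c
  constructor
  · rintro ⟨z, hz, rfl⟩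
    obtain ⟨hzS, hzK⟩ := Submodule.mem_inf.mp hz
    obtain ⟨l, hl, g, hg, rfl⟩ := Submodule.mem_sup.mp hzS
    have hPl : orthProj (bdryW A A') l = l := orthProj_eq_self hβ (hLβ hl)
    have hPg : orthProj (bdryW A A') g = 0 :=
      orthProj_eq_zero hβ (graphW_le_orthogonal_bdry A A' hg)
    have hP : orthProj (bdryW A A') (l + g) = l := by rw [map_add, hPl, hPg, add_zero]
    rw [ContinuousLinearMap.coe_coe, hP]
    exact Submodule.mem_inf.mpr ⟨hl, Submodule.mem_map.mpr ⟨l + g, hzK, hP⟩⟩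
  · intro hc
    obtain ⟨hcL, hc'⟩ := Submodule.mem_inf.mp hc
    obtain ⟨k, hk, hck⟩ := Submodule.mem_map.mp hc'
    have hkΓ' : k ∈ graphW A' := kerW_le hk
    have hdec := (proj_decomp hAg hA'g hle hkΓ').2
    have hkS : k ∈ L ⊔ graphW A := by
      have : k = c + (k - orthProj (bdryW A A') k) := by rw [ContinuousLinearMap.coe_coe] at hck; rw [hck]; abel
      rw [this]
      exact Submodule.add_mem_sup hcL hdec
    exact ⟨k, Submodule.mem_inf.mpr ⟨hkS, hk⟩, hck⟩

theorem inf_kerW_proj_zero {A A' : H →ₗ.[ℂ] H}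
    (hAg : IsClosed ((A.graph : Submodule ℂ (H × H)) : Set (H × H)))
    (hA'g : IsClosed ((A'.graph : Submodule ℂ (H × H)) : Set (H × H)))
    (hle : A ≤ A') {L : Submodule ℂ (WithLp 2 (H × H))}
    {z : WithLp 2 (H × H)} (hz : z ∈ (L ⊔ graphW A) ⊓ kerW A')
    (hLβ : L ≤ bdryW A A')
    (h0 : orthProj (bdryW A A') z = 0) : z ∈ graphW A ⊓ kerW A' := by
  obtain ⟨hzS, hzK⟩ := Submodule.mem_inf.mp hz
  exact Submodule.mem_inf.mpr
    ⟨mem_graphW_of_proj_eq_zero hAg hA'g hle (kerW_le hzK) h0, hzK⟩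
theorem fd_ext {K V : Type*} [DivisionRing K] [AddCommGroup V] [Module K V]
    (N : Submodule K V) (h1 : FiniteDimensional K N) (h2 : FiniteDimensional K (V ⧸ N)) :
    FiniteDimensional K V := by
  rw [FiniteDimensional, Module.finite_def] at h2 ⊢
  apply Submodule.fg_of_fg_map_of_fg_inf_ker N.mkQ
  · rwa [Submodule.map_top, Submodule.range_mkQ]
  · rw [Submodule.ker_mkQ, top_inf_eq, ← Submodule.fg_top]
    exact Module.finite_def.mp h1

theorem ker_mkQ_comp {K X Y : Type*} [Field K] [AddCommGroup X] [Module K X]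
    [AddCommGroup Y] [Module K Y] (T : X →ₗ[K] Y) (S : Submodule K X)
    (hS : LinearMap.ker T ≤ S) :
    LinearMap.ker ((S.map T).mkQ.comp T) = S := by
  ext x
  simp only [LinearMap.mem_ker, LinearMap.comp_apply, Submodule.mkQ_apply,
    Submodule.Quotient.mk_eq_zero]
  constructor
  · rintro h
    obtain ⟨s, hs, hsx⟩ := h
    have : x - s ∈ LinearMap.ker T := by
      simp [LinearMap.mem_ker, map_sub, hsx]
    have hx : x - s ∈ S := hS this
    simpa using S.add_mem hx hs
  · intro hx
    exact Submodule.mem_map_of_mem hx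

theorem fd_quot_of_fd_quot_map {K X Y : Type*} [Field K] [AddCommGroup X] [Module K X]
    [AddCommGroup Y] [Module K Y] (T : X →ₗ[K] Y) (S : Submodule K X)
    (hS : LinearMap.ker T ≤ S) (h : FiniteDimensional K (Y ⧸ S.map T)) :
    FiniteDimensional K (X ⧸ S) := by
  set g := (S.map T).mkQ.comp T with hg
  have hker : LinearMap.ker g = S := ker_mkQ_comp T S hS
  rw [← hker]
  have e := g.quotKerEquivRange
  exact Module.Finite.equiv e.symm

theorem fd_quot_map_of_fd_quot {K X Y : Type*} [Field K] [AddCommGroup X] [Module K X]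
    [AddCommGroup Y] [Module K Y] (T : X →ₗ[K] Y) (S : Submodule K X)
    (hS : LinearMap.ker T ≤ S) (h1 : FiniteDimensional K (X ⧸ S))
    (h2 : FiniteDimensional K (Y ⧸ LinearMap.range T)) :
    FiniteDimensional K (Y ⧸ S.map T) := by
  set p := S.map T with hp
  have hpq : p ≤ LinearMap.range T := by
    rw [hp]
    rintro y ⟨x, _, rfl⟩
    exact ⟨x, rfl⟩
  apply fd_ext ((LinearMap.range T).map p.mkQ)
  · have hrg : (LinearMap.range T).map p.mkQ = LinearMap.range (p.mkQ.comp T) := by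
      rw [LinearMap.range_comp]
    rw [hrg]
    have e := (p.mkQ.comp T).quotKerEquivRange
    rw [ker_mkQ_comp T S hS] at e
    exact Module.Finite.equiv e
  · exact Module.Finite.equiv (Submodule.quotientQuotientEquivQuotient p (LinearMap.range T) hpq).symm

theorem fd_graphW_inf_kerW {A A' : H →ₗ.[ℂ] H} (hle : A ≤ A')
    (h : FiniteDimensional ℂ (LinearMap.ker A.toFun)) :
    FiniteDimensional ℂ ↥(graphW A ⊓ kerW A') := by
  have E := (LinearEquiv.ofInjective (kerAMap A) (kerAMap_injective A)).trans
    (LinearEquiv.ofEq _ _ (kerAMap_range hle))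
  exact Module.Finite.equiv E

theorem fd_ker_realization_iff {A A' : H →ₗ.[ℂ] H}
    (hAg : IsClosed ((A.graph : Submodule ℂ (H × H)) : Set (H × H)))
    (hA'g : IsClosed ((A'.graph : Submodule ℂ (H × H)) : Set (H × H)))
    (hle : A ≤ A') {L : Submodule ℂ (WithLp 2 (H × H))} (hLβ : L ≤ bdryW A A')
    (hkerA : FiniteDimensional ℂ (LinearMap.ker A.toFun)) :
    FiniteDimensional ℂ (LinearMap.ker (realization A A' L).toFun) ↔
      FiniteDimensional ℂ ↥(L ⊓ cauchyW A A') := by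
  have E1 : ↥(LinearMap.ker (realization A A' L).toFun) ≃ₗ[ℂ] ↥((L ⊔ graphW A) ⊓ kerW A') :=
    (LinearEquiv.ofInjective (kerMap A A' L) (kerMap_injective A A' L)).trans
      (LinearEquiv.ofEq _ _ (kerMap_range hle hLβ))
  set φ : ↥((L ⊔ graphW A) ⊓ kerW A') →ₗ[ℂ] WithLp 2 (H × H) :=
    ((orthProj (bdryW A A') : WithLp 2 (H × H) →L[ℂ] WithLp 2 (H × H)) :
      WithLp 2 (H × H) →ₗ[ℂ] WithLp 2 (H × H)) ∘ₗ ((L ⊔ graphW A) ⊓ kerW A').subtype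
    with hφdef
  have hφrange : LinearMap.range φ = L ⊓ cauchyW A A' := by
    rw [hφdef, LinearMap.range_comp, Submodule.range_subtype]
    exact proj_inf_kerW hAg hA'g hle hLβ
  constructor
  · intro h
    haveI : FiniteDimensional ℂ ↥((L ⊔ graphW A) ⊓ kerW A') := Module.Finite.equiv E1
    have : FiniteDimensional ℂ (LinearMap.range φ) := inferInstance
    rw [hφrange] at this
    exact this
  · intro h
    have hkerfd : FiniteDimensional ℂ (LinearMap.ker φ) := by
      haveI : FiniteDimensional ℂ ↥(graphW A ⊓ kerW A') := fd_graphW_inf_kerW hle hkerA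
      set ψ : ↥(LinearMap.ker φ) →ₗ[ℂ] ↥(graphW A ⊓ kerW A') :=
        LinearMap.codRestrict (graphW A ⊓ kerW A')
          ((((L ⊔ graphW A) ⊓ kerW A').subtype) ∘ₗ (LinearMap.ker φ).subtype)
          (fun z => by
            have hz0 : orthProj (bdryW A A') (z.1 : WithLp 2 (H × H)) = 0 := z.2
            exact inf_kerW_proj_zero hAg hA'g hle z.1.2 hLβ hz0) with hψdef
      have hψinj : Function.Injective ψ := by
        intro a b hab
        have := congrArg Subtype.val hab
        simp only [hψdef, LinearMap.codRestrict_apply, LinearMap.comp_apply] at this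
        exact Subtype.ext (Subtype.ext this)
      exact FiniteDimensional.of_injective ψ hψinj
    have hquot : FiniteDimensional ℂ
        (↥((L ⊔ graphW A) ⊓ kerW A') ⧸ LinearMap.ker φ) := by
      haveI : FiniteDimensional ℂ (LinearMap.range φ) := by rw [hφrange]; exact h
      exact Module.Finite.equiv φ.quotKerEquivRange.symm
    haveI := fd_ext (LinearMap.ker φ) hkerfd hquot
    exact Module.Finite.equiv E1.symm

theorem ker_realization_eq_bot_iff {A A' : H →ₗ.[ℂ] H}
    (hAg : IsClosed ((A.graph : Submodule ℂ (H × H)) : Set (H × H)))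
    (hA'g : IsClosed ((A'.graph : Submodule ℂ (H × H)) : Set (H × H)))
    (hle : A ≤ A') {L : Submodule ℂ (WithLp 2 (H × H))} (hLβ : L ≤ bdryW A A')
    (hAinj : Function.Injective A.toFun) :
    LinearMap.ker (realization A A' L).toFun = ⊥ ↔ L ⊓ cauchyW A A' = ⊥ := by
  have hΓK : graphW A ⊓ kerW A' = ⊥ := by
    rw [eq_bot_iff]
    intro z hz
    rw [← kerAMap_range hle] at hz
    obtain ⟨v, rfl⟩ := hz
    have : v = 0 := by
      have h0 : A.toFun v.1 = 0 := v.2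
      have : (v.1 : H) = 0 := by
        have := hAinj (a₁ := v.1) (a₂ := 0) (by rw [h0, map_zero])
        exact congrArg Subtype.val this
      exact Subtype.ext (Subtype.ext this)
    rw [this, map_zero]
    exact Submodule.mem_bot ℂ |>.mpr rfl
  constructor
  · intro h
    have hSK : (L ⊔ graphW A) ⊓ kerW A' = ⊥ := by
      rw [eq_bot_iff]
      intro z hz
      rw [← kerMap_range hle hLβ] at hz
      obtain ⟨v, rfl⟩ := hz
      have hker0 : ∀ x : ↥(realization A A' L).domain,
          x ∈ LinearMap.ker (realization A A' L).toFun → x = 0 := fun x hx => by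
        rwa [h, Submodule.mem_bot] at hx
      have : v = 0 := Subtype.ext (hker0 _ v.2)
      rw [this, map_zero]
      exact Submodule.mem_bot ℂ |>.mpr rfl
    rw [← proj_inf_kerW hAg hA'g hle hLβ, hSK, Submodule.map_bot]
  · intro h
    rw [eq_bot_iff]
    intro v hv
    have hmem : kerMap A A' L ⟨v, hv⟩ ∈ (L ⊔ graphW A) ⊓ kerW A' := by
      rw [← kerMap_range hle hLβ]
      exact ⟨⟨v, hv⟩, rfl⟩
    have hP : orthProj (bdryW A A') (kerMap A A' L ⟨v, hv⟩) ∈ L ⊓ cauchyW A A' := by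
      rw [← proj_inf_kerW hAg hA'g hle hLβ]
      exact ⟨_, hmem, rfl⟩
    rw [h, Submodule.mem_bot] at hP
    have hΓ : kerMap A A' L ⟨v, hv⟩ ∈ graphW A ⊓ kerW A' :=
      inf_kerW_proj_zero hAg hA'g hle hmem hLβ hP
    rw [hΓK, Submodule.mem_bot] at hΓ
    have : (⟨v, hv⟩ : ↥(LinearMap.ker (realization A A' L).toFun)) = 0 :=
      kerMap_injective A A' L (by rw [hΓ, map_zero])
    have := congrArg Subtype.val this
    simpa using this

theorem fd_of_subsingleton {K V : Type*} [DivisionRing K] [AddCommGroup V] [Module K V]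
    [Subsingleton V] : FiniteDimensional K V := by
  rw [FiniteDimensional, Module.finite_def, Subsingleton.elim (⊤ : Submodule K V) ⊥]
  exact Submodule.fg_bot

theorem closed_comap_subtype {W' : Type*} [NormedAddCommGroup W'] [InnerProductSpace ℂ W']
    {p q : Submodule ℂ W'} (hq : IsClosed (q : Set W')) (hpq : p ≤ q) :
    IsClosed ((p.comap q.subtype : Submodule ℂ ↥q) : Set ↥q) ↔ IsClosed (p : Set W') := by
  constructor
  · intro h
    have himg : (Subtype.val : ↥q → W') '' ((p.comap q.subtype : Submodule ℂ ↥q) : Set ↥q)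
        = (p : Set W') := by
      ext x
      constructor
      · rintro ⟨y, hy, rfl⟩; exact hy
      · intro hx; exact ⟨⟨x, hpq hx⟩, hx, rfl⟩
    rw [← himg]
    exact hq.isClosedEmbedding_subtypeVal.isClosedMap _ h
  · intro h
    exact h.preimage continuous_subtype_val

/-- The second-coordinate map on the graph of `A'`. -/
def sndT (A' : H →ₗ.[ℂ] H) : ↥(graphW A') →L[ℂ] H :=
  (ContinuousLinearMap.snd ℂ H H).comp
    ((((WithLp.prodContinuousLinearEquiv 2 ℂ H H) :
        WithLp 2 (H × H) ≃L[ℂ] H × H) : WithLp 2 (H × H) →L[ℂ] H × H).comp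
      (graphW A').subtypeL)

theorem sndT_apply (A' : H →ₗ.[ℂ] H) (z : ↥(graphW A')) :
    sndT A' z = ((WithLp.linearEquiv 2 ℂ (H × H)) (z : WithLp 2 (H × H))).2 := rfl

theorem range_sndT (A' : H →ₗ.[ℂ] H) :
    LinearMap.range (sndT A' : ↥(graphW A') →ₗ[ℂ] H) = LinearMap.range A'.toFun := by
  ext y
  constructor
  · rintro ⟨z, rfl⟩
    obtain ⟨hd, heq⟩ := graphW_fst z.2
    exact ⟨⟨_, hd⟩, heq⟩
  · rintro ⟨v, rfl⟩
    have hmem : (WithLp.linearEquiv 2 ℂ (H × H)).symm ((v : H), A' v) ∈ graphW A' := by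
      rw [mem_graphW, LinearEquiv.apply_symm_apply]
      exact LinearPMap.mem_graph A' v
    refine ⟨⟨_, hmem⟩, ?_⟩
    rw [ContinuousLinearMap.coe_coe, sndT_apply]
    simp

theorem ker_sndT (A' : H →ₗ.[ℂ] H) :
    LinearMap.ker (sndT A' : ↥(graphW A') →ₗ[ℂ] H) = (kerW A').comap (graphW A').subtype := by
  ext z
  rw [LinearMap.mem_ker, Submodule.mem_comap, ContinuousLinearMap.coe_coe, sndT_apply, mem_kerW]
  simp only [Submodule.coe_subtype]
  exact ⟨fun h => ⟨z.2, h⟩, fun h => h.2⟩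

theorem map_sndT {A A' : H →ₗ.[ℂ] H} (hle : A ≤ A')
    {L : Submodule ℂ (WithLp 2 (H × H))} (hLβ : L ≤ bdryW A A') :
    (((L ⊔ graphW A) ⊔ kerW A').comap (graphW A').subtype).map
        ((sndT A') : ↥(graphW A') →ₗ[ℂ] H) =
      LinearMap.range (realization A A' L).toFun := by
  rw [range_realization hle hLβ]
  ext y
  constructor
  · rintro ⟨z, hz, rfl⟩
    have hzm : (z : WithLp 2 (H × H)) ∈ (L ⊔ graphW A) ⊔ kerW A' := hz
    obtain ⟨s, hs, k, hk, hsk⟩ := Submodule.mem_sup.mp hzm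
    have h2 : ((WithLp.linearEquiv 2 ℂ (H × H)) k).2 = 0 := (mem_kerW.mp hk).2
    refine ⟨s, hs, ?_⟩
    have heq : ((WithLp.linearEquiv 2 ℂ (H × H)) (z : WithLp 2 (H × H))).2
        = ((WithLp.linearEquiv 2 ℂ (H × H)) s).2 := by
      rw [← hsk, map_add]
      have : ((WithLp.linearEquiv 2 ℂ (H × H)) s + (WithLp.linearEquiv 2 ℂ (H × H)) k).2
          = ((WithLp.linearEquiv 2 ℂ (H × H)) s).2 + ((WithLp.linearEquiv 2 ℂ (H × H)) k).2 := rfl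
      rw [this, h2, add_zero]
    exact heq.symm
  · rintro ⟨s, hs, rfl⟩
    have hsm : s ∈ (L ⊔ graphW A) ⊔ kerW A' := Submodule.mem_sup_left hs
    have hsΓ' : s ∈ graphW A' := sup_le (sup_le_graphW hle hLβ) kerW_le hsm
    exact ⟨⟨s, hsΓ'⟩, hsm, rfl⟩

/-- The boundary-projection map on the graph of `A'`. -/
def projT (A A' : H →ₗ.[ℂ] H)
    (hAg : IsClosed ((A.graph : Submodule ℂ (H × H)) : Set (H × H)))
    (hA'g : IsClosed ((A'.graph : Submodule ℂ (H × H)) : Set (H × H)))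
    (hle : A ≤ A') : ↥(graphW A') →L[ℂ] ↥(bdryW A A') :=
  ContinuousLinearMap.codRestrict
    ((orthProj (bdryW A A')).comp (graphW A').subtypeL) (bdryW A A')
    (fun z => (proj_decomp hAg hA'g hle z.2).1)

theorem projT_apply (A A' : H →ₗ.[ℂ] H) (hAg) (hA'g) (hle : A ≤ A') (z : ↥(graphW A')) :
    (projT A A' hAg hA'g hle z : WithLp 2 (H × H))
      = orthProj (bdryW A A') (z : WithLp 2 (H × H)) := rfl

theorem range_projT (A A' : H →ₗ.[ℂ] H) (hAg) (hA'g) (hle : A ≤ A') :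
    LinearMap.range (projT A A' hAg hA'g hle : ↥(graphW A') →ₗ[ℂ] ↥(bdryW A A')) = ⊤ := by
  rw [eq_top_iff]
  rintro b -
  have hbΓ' : (b : WithLp 2 (H × H)) ∈ graphW A' := bdryW_le b.2
  refine ⟨⟨b, hbΓ'⟩, ?_⟩
  apply Subtype.ext
  rw [ContinuousLinearMap.coe_coe, projT_apply]
  exact orthProj_eq_self (bdryW_closed hA'g).isComplete b.2

theorem ker_projT (A A' : H →ₗ.[ℂ] H) (hAg) (hA'g) (hle : A ≤ A') :
    LinearMap.ker (projT A A' hAg hA'g hle : ↥(graphW A') →ₗ[ℂ] ↥(bdryW A A')) = (graphW A).comap (graphW A').subtype := by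
  ext z
  rw [LinearMap.mem_ker, Submodule.mem_comap]
  constructor
  · intro h
    have h0 : orthProj (bdryW A A') (z : WithLp 2 (H × H)) = 0 := by
      have := congrArg Subtype.val h
      rwa [ContinuousLinearMap.coe_coe, projT_apply] at this
    exact mem_graphW_of_proj_eq_zero hAg hA'g hle z.2 h0
  · intro h
    apply Subtype.ext
    rw [ContinuousLinearMap.coe_coe, projT_apply]
    exact orthProj_eq_zero (bdryW_closed hA'g).isComplete (graphW_le_orthogonal_bdry A A' h)

theorem map_projT {A A' : H →ₗ.[ℂ] H} (hAg) (hA'g) (hle : A ≤ A')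
    {L : Submodule ℂ (WithLp 2 (H × H))} (hLβ : L ≤ bdryW A A') :
    (((L ⊔ graphW A) ⊔ kerW A').comap (graphW A').subtype).map
        ((projT A A' hAg hA'g hle) : ↥(graphW A') →ₗ[ℂ] ↥(bdryW A A')) =
      (L ⊔ cauchyW A A').comap (bdryW A A').subtype := by
  have hβ : IsComplete ((bdryW A A' : Submodule ℂ (WithLp 2 (H × H)))
      : Set (WithLp 2 (H × H))) := (bdryW_closed hA'g).isComplete
  ext w
  rw [Submodule.mem_map, Submodule.mem_comap]
  constructor
  · rintro ⟨z, hz, rfl⟩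
    have hzm : (z : WithLp 2 (H × H)) ∈ (L ⊔ graphW A) ⊔ kerW A' := hz
    obtain ⟨s, hs, k, hk, hsk⟩ := Submodule.mem_sup.mp hzm
    obtain ⟨l, hl, g, hg, hlg⟩ := Submodule.mem_sup.mp hs
    have hP : orthProj (bdryW A A') (z : WithLp 2 (H × H))
        = l + orthProj (bdryW A A') k := by
      rw [← hsk, ← hlg, map_add, map_add,
        orthProj_eq_self hβ (hLβ hl),
        orthProj_eq_zero hβ (graphW_le_orthogonal_bdry A A' hg), add_zero]
    show orthProj (bdryW A A') (z : WithLp 2 (H × H)) ∈ L ⊔ cauchyW A A'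
    rw [hP]
    exact Submodule.add_mem_sup hl (Submodule.mem_map.mpr ⟨k, hk, rfl⟩)
  · intro hw
    obtain ⟨l, hl, c, hc, hlc⟩ := Submodule.mem_sup.mp hw
    obtain ⟨k, hk, hck⟩ := Submodule.mem_map.mp hc
    have hlk : l + k ∈ (L ⊔ graphW A) ⊔ kerW A' :=
      Submodule.add_mem_sup (Submodule.mem_sup_left hl) hk
    have hlkΓ' : l + k ∈ graphW A' := sup_le (sup_le_graphW hle hLβ) kerW_le hlk
    refine ⟨⟨l + k, hlkΓ'⟩, hlk, ?_⟩
    apply Subtype.ext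
    show orthProj (bdryW A A') (l + k) = (w : WithLp 2 (H × H))
    have hlc' : l + c = (w : WithLp 2 (H × H)) := hlc
    rw [ContinuousLinearMap.coe_coe] at hck
    rw [map_add, orthProj_eq_self hβ (hLβ hl), hck, hlc']
theorem transfer_closed {X Y : Type*} [NormedAddCommGroup X] [InnerProductSpace ℂ X]
    [CompleteSpace X] [NormedAddCommGroup Y] [InnerProductSpace ℂ Y] [CompleteSpace Y]
    (T : X →L[ℂ] Y) (hT : IsClosed ((LinearMap.range (T : X →ₗ[ℂ] Y) : Submodule ℂ Y) : Set Y))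
    (S : Submodule ℂ X) (hS : LinearMap.ker (T : X →ₗ[ℂ] Y) ≤ S) :
    IsClosed ((S.map (T : X →ₗ[ℂ] Y) : Submodule ℂ Y) : Set Y) ↔ IsClosed (S : Set X) := by
  constructor
  · intro h
    have hset : (S : Set X) = T ⁻¹' ((S.map (T : X →ₗ[ℂ] Y) : Submodule ℂ Y) : Set Y) := by
      ext x
      simp only [Set.mem_preimage, SetLike.mem_coe, Submodule.mem_map]
      constructor
      · intro hx; exact ⟨x, hx, rfl⟩
      · rintro ⟨s, hs, hsx⟩
        have hxk : x - s ∈ LinearMap.ker (T : X →ₗ[ℂ] Y) := by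
          simp only [LinearMap.mem_ker, ContinuousLinearMap.coe_coe] at hsx ⊢
          rw [map_sub, hsx, sub_self]
        have := hS hxk
        simpa using S.add_mem this hs
    rw [hset]
    exact h.preimage T.continuous
  · intro h
    set N : Submodule ℂ X := LinearMap.ker (T : X →ₗ[ℂ] Y) with hN
    haveI : CompleteSpace N := (ContinuousLinearMap.isClosed_ker T).completeSpace_coe
    set J : ↥(Nᗮ) →L[ℂ] Y := T.comp (Nᗮ).subtypeL with hJ
    have hJrange : LinearMap.range (J : ↥(Nᗮ) →ₗ[ℂ] Y) = LinearMap.range (T : X →ₗ[ℂ] Y) := by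
      apply le_antisymm
      · rintro y ⟨z, rfl⟩
        exact ⟨z, rfl⟩
      · rintro y ⟨x, rfl⟩
        refine ⟨⟨x - N.orthogonalProjectionOnto x, by rw [← Submodule.starProjection_apply]; exact Submodule.sub_starProjection_mem_orthogonal x⟩, ?_⟩
        simp only [ContinuousLinearMap.coe_coe, hJ, ContinuousLinearMap.comp_apply, Submodule.subtypeL_apply]
        rw [map_sub]
        have : T (N.orthogonalProjectionOnto x) = 0 := (N.orthogonalProjectionOnto x).2
        rw [this, sub_zero]
    set Jc : ↥(Nᗮ) →L[ℂ] ↥(LinearMap.range (T : X →ₗ[ℂ] Y)) :=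
      J.codRestrict (LinearMap.range (T : X →ₗ[ℂ] Y)) (fun z => hJrange ▸ LinearMap.mem_range_self (J : ↥(Nᗮ) →ₗ[ℂ] Y) z) with hJc
    have hinj : LinearMap.ker (Jc : ↥(Nᗮ) →ₗ[ℂ] ↥(LinearMap.range (T : X →ₗ[ℂ] Y))) = ⊥ := by
      rw [Submodule.eq_bot_iff]
      rintro z hz
      have hz' : T (z : X) = 0 := by
        have := congrArg Subtype.val hz
        simpa [hJc, hJ] using this
      have hzN : (z : X) ∈ N := hz'
      have : (z : X) ∈ N ⊓ Nᗮ := ⟨hzN, z.2⟩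
      rw [Submodule.inf_orthogonal_eq_bot] at this
      exact Subtype.ext this
    have hsurj : LinearMap.range (Jc : ↥(Nᗮ) →ₗ[ℂ] ↥(LinearMap.range (T : X →ₗ[ℂ] Y))) = ⊤ := by
      rw [Submodule.eq_top_iff']
      rintro ⟨y, hy⟩
      rw [← hJrange] at hy
      obtain ⟨z, hz⟩ := hy
      exact ⟨z, by apply Subtype.ext; simpa [hJc] using hz⟩
    haveI : CompleteSpace ↥(LinearMap.range (T : X →ₗ[ℂ] Y)) := hT.completeSpace_coe
    set E := ContinuousLinearEquiv.ofBijective Jc hinj hsurj with hE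
    have hset : ((S.map (T : X →ₗ[ℂ] Y) : Submodule ℂ Y) : Set Y) =
        (Subtype.val : ↥(LinearMap.range (T : X →ₗ[ℂ] Y)) → Y) ''
          (E '' ((Subtype.val : ↥(Nᗮ) → X) ⁻¹' (S : Set X))) := by
      ext y
      simp only [Set.mem_image, Set.mem_preimage, SetLike.mem_coe, Submodule.mem_map]
      constructor
      · rintro ⟨x, hx, rfl⟩
        set z : ↥(Nᗮ) := ⟨x - N.orthogonalProjectionOnto x, by rw [← Submodule.starProjection_apply]; exact Submodule.sub_starProjection_mem_orthogonal x⟩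
        have hzS : (z : X) ∈ S := S.sub_mem hx (hS (N.orthogonalProjectionOnto x).2)
        refine ⟨Jc z, ⟨z, hzS, rfl⟩, ?_⟩
        simp only [hJc, ContinuousLinearMap.coe_codRestrict_apply, hJ,
          ContinuousLinearMap.comp_apply, Submodule.subtypeL_apply]
        rw [map_sub]
        have : T (N.orthogonalProjectionOnto x) = 0 := (N.orthogonalProjectionOnto x).2
        rw [this, sub_zero]
        rfl
      · rintro ⟨w, ⟨z, hz, rfl⟩, rfl⟩
        refine ⟨(z : X), hz, ?_⟩
        simp [hE, hJc, hJ]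
    rw [hset]
    have h1 : IsClosed ((Subtype.val : ↥(Nᗮ) → X) ⁻¹' (S : Set X)) :=
      h.preimage continuous_subtype_val
    have h2 : IsClosed (E '' ((Subtype.val : ↥(Nᗮ) → X) ⁻¹' (S : Set X))) :=
      E.toHomeomorph.isClosedMap _ h1
    exact hT.isClosedEmbedding_subtypeVal.isClosedMap _ h2

theorem sup_cauchy_le_bdry {A A' : H →ₗ.[ℂ] H}
    (hAg : IsClosed ((A.graph : Submodule ℂ (H × H)) : Set (H × H)))
    (hA'g : IsClosed ((A'.graph : Submodule ℂ (H × H)) : Set (H × H)))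
    (hle : A ≤ A') {L : Submodule ℂ (WithLp 2 (H × H))} (hLβ : L ≤ bdryW A A') :
    L ⊔ cauchyW A A' ≤ bdryW A A' :=
  sup_le hLβ (cauchyW_le_bdryW hAg hA'g hle)

theorem closed_range_realization_iff {A A' : H →ₗ.[ℂ] H}
    (hAg : IsClosed ((A.graph : Submodule ℂ (H × H)) : Set (H × H)))
    (hA'g : IsClosed ((A'.graph : Submodule ℂ (H × H)) : Set (H × H)))
    (hle : A ≤ A') {L : Submodule ℂ (WithLp 2 (H × H))} (hLβ : L ≤ bdryW A A')
    (hA'ran : IsClosed ((LinearMap.range A'.toFun : Submodule ℂ H) : Set H)) :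
    IsClosed ((LinearMap.range (realization A A' L).toFun : Submodule ℂ H) : Set H) ↔
      IsClosed ((L ⊔ cauchyW A A' : Submodule ℂ (WithLp 2 (H × H)))
        : Set (WithLp 2 (H × H))) := by
  haveI : CompleteSpace ↥(graphW A') := (graphW_closed hA'g).completeSpace_coe
  haveI : CompleteSpace ↥(bdryW A A') := (bdryW_closed hA'g).completeSpace_coe
  set S' : Submodule ℂ ↥(graphW A') :=
    ((L ⊔ graphW A) ⊔ kerW A').comap (graphW A').subtype with hS'
  have h1 : IsClosed ((LinearMap.range (realization A A' L).toFun : Submodule ℂ H) : Set H)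
      ↔ IsClosed (S' : Set ↥(graphW A')) := by
    rw [← map_sndT hle hLβ]
    exact transfer_closed (sndT A') (by rw [range_sndT]; exact hA'ran) S'
      (by rw [hS', ker_sndT]; exact Submodule.comap_mono le_sup_right)
  have h2 : IsClosed (((L ⊔ cauchyW A A').comap (bdryW A A').subtype
        : Submodule ℂ ↥(bdryW A A')) : Set ↥(bdryW A A'))
      ↔ IsClosed (S' : Set ↥(graphW A')) := by
    rw [← map_projT hAg hA'g hle hLβ]
    refine transfer_closed (projT A A' hAg hA'g hle) ?_ S' ?_
    · rw [range_projT]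
      simp only [Submodule.top_coe]
      exact isClosed_univ
    · rw [hS', ker_projT]
      exact Submodule.comap_mono (le_sup_of_le_left le_sup_right)
  rw [h1, ← h2]
  exact closed_comap_subtype (bdryW_closed hA'g) (sup_cauchy_le_bdry hAg hA'g hle hLβ)

theorem fd_coker_realization_iff {A A' : H →ₗ.[ℂ] H}
    (hAg : IsClosed ((A.graph : Submodule ℂ (H × H)) : Set (H × H)))
    (hA'g : IsClosed ((A'.graph : Submodule ℂ (H × H)) : Set (H × H)))
    (hle : A ≤ A') {L : Submodule ℂ (WithLp 2 (H × H))} (hLβ : L ≤ bdryW A A')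
    (hA'coker : FiniteDimensional ℂ (H ⧸ LinearMap.range A'.toFun)) :
    FiniteDimensional ℂ (H ⧸ LinearMap.range (realization A A' L).toFun) ↔
      FiniteDimensional ℂ (↥(bdryW A A') ⧸
        (L ⊔ cauchyW A A').comap (bdryW A A').subtype) := by
  set S' : Submodule ℂ ↥(graphW A') :=
    ((L ⊔ graphW A) ⊔ kerW A').comap (graphW A').subtype with hS'
  have hker1 : LinearMap.ker ((sndT A') : ↥(graphW A') →ₗ[ℂ] H) ≤ S' := by
    have : LinearMap.ker ((sndT A') : ↥(graphW A') →ₗ[ℂ] H) = LinearMap.ker ((sndT A') : ↥(graphW A') →ₗ[ℂ] H) := rfl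
    rw [this, ker_sndT, hS']
    exact Submodule.comap_mono le_sup_right
  have hker2 : LinearMap.ker ((projT A A' hAg hA'g hle)
      : ↥(graphW A') →ₗ[ℂ] ↥(bdryW A A')) ≤ S' := by
    have : LinearMap.ker ((projT A A' hAg hA'g hle) : ↥(graphW A') →ₗ[ℂ] ↥(bdryW A A'))
        = LinearMap.ker ((projT A A' hAg hA'g hle) : ↥(graphW A') →ₗ[ℂ] ↥(bdryW A A')) := rfl
    rw [this, ker_projT, hS']
    exact Submodule.comap_mono (le_sup_of_le_left le_sup_right)
  have hran1 : LinearMap.range ((sndT A') : ↥(graphW A') →ₗ[ℂ] H)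
      = LinearMap.range A'.toFun := by
    have : LinearMap.range ((sndT A') : ↥(graphW A') →ₗ[ℂ] H)
        = LinearMap.range ((sndT A') : ↥(graphW A') →ₗ[ℂ] H) := rfl
    rw [this, range_sndT]
  have hran2 : LinearMap.range ((projT A A' hAg hA'g hle)
      : ↥(graphW A') →ₗ[ℂ] ↥(bdryW A A')) = ⊤ := by
    have : LinearMap.range ((projT A A' hAg hA'g hle) : ↥(graphW A') →ₗ[ℂ] ↥(bdryW A A'))
        = LinearMap.range ((projT A A' hAg hA'g hle) : ↥(graphW A') →ₗ[ℂ] ↥(bdryW A A')) := rfl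
    rw [this, range_projT]
  constructor
  · intro h
    have hmid : FiniteDimensional ℂ (↥(graphW A') ⧸ S') := by
      apply fd_quot_of_fd_quot_map ((sndT A') : ↥(graphW A') →ₗ[ℂ] H) S' hker1
      rwa [map_sndT hle hLβ]
    have := fd_quot_map_of_fd_quot
      ((projT A A' hAg hA'g hle) : ↥(graphW A') →ₗ[ℂ] ↥(bdryW A A')) S' hker2 hmid ?_
    · rwa [map_projT hAg hA'g hle hLβ] at this
    · rw [hran2]
      haveI : Subsingleton (↥(bdryW A A') ⧸ (⊤ : Submodule ℂ ↥(bdryW A A'))) :=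
        Submodule.Quotient.subsingleton_iff.mpr rfl
      exact fd_of_subsingleton
  · intro h
    have hmid : FiniteDimensional ℂ (↥(graphW A') ⧸ S') := by
      apply fd_quot_of_fd_quot_map
        ((projT A A' hAg hA'g hle) : ↥(graphW A') →ₗ[ℂ] ↥(bdryW A A')) S' hker2
      rwa [map_projT hAg hA'g hle hLβ]
    have := fd_quot_map_of_fd_quot ((sndT A') : ↥(graphW A') →ₗ[ℂ] H) S' hker1 hmid
      (by rwa [hran1])
    rwa [map_sndT hle hLβ] at this

theorem range_realization_eq_top_iff {A A' : H →ₗ.[ℂ] H}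
    (hAg : IsClosed ((A.graph : Submodule ℂ (H × H)) : Set (H × H)))
    (hA'g : IsClosed ((A'.graph : Submodule ℂ (H × H)) : Set (H × H)))
    (hle : A ≤ A') {L : Submodule ℂ (WithLp 2 (H × H))} (hLβ : L ≤ bdryW A A')
    (hA'surj : LinearMap.range A'.toFun = ⊤) :
    LinearMap.range (realization A A' L).toFun = ⊤ ↔
      L ⊔ cauchyW A A' = bdryW A A' := by
  have hβ : IsComplete ((bdryW A A' : Submodule ℂ (WithLp 2 (H × H)))
      : Set (WithLp 2 (H × H))) := (bdryW_closed hA'g).isComplete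
  constructor
  · intro h
    apply le_antisymm (sup_cauchy_le_bdry hAg hA'g hle hLβ)
    intro b hb
    have hbΓ' : b ∈ graphW A' := bdryW_le hb
    have hmem : ((WithLp.linearEquiv 2 ℂ (H × H)) b).2
        ∈ LinearMap.range (realization A A' L).toFun := by
      rw [h]; trivial
    rw [range_realization hle hLβ] at hmem
    obtain ⟨z, hz, hz2⟩ := hmem
    have hz2' : ((WithLp.linearEquiv 2 ℂ (H × H)) z).2
        = ((WithLp.linearEquiv 2 ℂ (H × H)) b).2 := hz2
    have hbz : b - z ∈ kerW A' := by
      refine mem_kerW.mpr ⟨Submodule.sub_mem _ hbΓ' (sup_le_graphW hle hLβ hz), ?_⟩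
      rw [map_sub]
      have : ((WithLp.linearEquiv 2 ℂ (H × H)) b - (WithLp.linearEquiv 2 ℂ (H × H)) z).2
          = ((WithLp.linearEquiv 2 ℂ (H × H)) b).2
            - ((WithLp.linearEquiv 2 ℂ (H × H)) z).2 := rfl
      rw [this, hz2', sub_self]
    obtain ⟨l, hl, g, hg, hlg⟩ := Submodule.mem_sup.mp hz
    have hPz : orthProj (bdryW A A') z = l := by
      rw [← hlg, map_add, orthProj_eq_self hβ (hLβ hl),
        orthProj_eq_zero hβ (graphW_le_orthogonal_bdry A A' hg), add_zero]
    have hkey : b = l + orthProj (bdryW A A') (b - z) := by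
      have h1 : orthProj (bdryW A A') b = b := orthProj_eq_self hβ hb
      have h2 : orthProj (bdryW A A') (b - z)
          = orthProj (bdryW A A') b - orthProj (bdryW A A') z := map_sub _ _ _
      rw [h2, h1, hPz]
      abel
    rw [hkey]
    exact Submodule.add_mem_sup hl (Submodule.mem_map.mpr ⟨b - z, hbz, rfl⟩)
  · intro h
    rw [eq_top_iff]
    rintro y -
    obtain ⟨v, hv⟩ : ∃ v, A'.toFun v = y := by
      have : y ∈ LinearMap.range A'.toFun := by rw [hA'surj]; trivial
      exact this
    set z := (WithLp.linearEquiv 2 ℂ (H × H)).symm ((v : H), y) with hzdef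
    have hzΓ' : z ∈ graphW A' := by
      rw [mem_graphW, hzdef, LinearEquiv.apply_symm_apply]
      rw [← hv]
      exact LinearPMap.mem_graph A' v
    have hPz : orthProj (bdryW A A') z ∈ L ⊔ cauchyW A A' := by
      rw [h]
      exact (proj_decomp hAg hA'g hle hzΓ').1
    obtain ⟨l, hl, c, hc, hlc⟩ := Submodule.mem_sup.mp hPz
    obtain ⟨k, hk, hck⟩ := Submodule.mem_map.mp hc
    have h1 : z - orthProj (bdryW A A') z ∈ graphW A := (proj_decomp hAg hA'g hle hzΓ').2
    have h2 : k - orthProj (bdryW A A') k ∈ graphW A :=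
      (proj_decomp hAg hA'g hle (kerW_le hk)).2
    have hzk : z - k ∈ L ⊔ graphW A := by
      have hkey : z - k = l + ((z - orthProj (bdryW A A') z)
          - (k - orthProj (bdryW A A') k)) := by
        rw [ContinuousLinearMap.coe_coe] at hck
        rw [hck, ← hlc]
        abel
      rw [hkey]
      exact Submodule.add_mem_sup hl (Submodule.sub_mem _ h1 h2)
    rw [range_realization hle hLβ]
    refine ⟨z - k, hzk, ?_⟩
    show ((WithLp.linearEquiv 2 ℂ (H × H)) (z - k)).2 = y
    rw [map_sub]
    have hsplit : ((WithLp.linearEquiv 2 ℂ (H × H)) z - (WithLp.linearEquiv 2 ℂ (H × H)) k).2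
        = ((WithLp.linearEquiv 2 ℂ (H × H)) z).2 - ((WithLp.linearEquiv 2 ℂ (H × H)) k).2 := rfl
    rw [hsplit, (mem_kerW.mp hk).2, sub_zero, hzdef, LinearEquiv.apply_symm_apply]


/-- for a Fredholm extension pair `(A, A')` and a closed boundary condition
`L ⊆ β`, the realization `A_L` is Fredholm iff `(L, C)` is a Fredholm pair in `β`;
for an invertible extension pair, `A_L` maps its domain bijectively onto `H` iff
`(L, C)` is a transversal pair in `β`. -/
theorem statement_5
    {H : Type*} [NormedAddCommGroup H] [InnerProductSpace ℂ H] [CompleteSpace H]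
    (A A' : H →ₗ.[ℂ] H)
    (hAgraph : IsClosed ((A.graph : Submodule ℂ (H × H)) : Set (H × H)))
    (hAdense : Dense ((A.domain : Submodule ℂ H) : Set H))
    (hA'graph : IsClosed ((A'.graph : Submodule ℂ (H × H)) : Set (H × H)))
    (hA'dense : Dense ((A'.domain : Submodule ℂ H) : Set H))
    (hle : A ≤ A')
    (L : Submodule ℂ (WithLp 2 (H × H)))
    (hLcl : IsClosed ((L : Submodule ℂ (WithLp 2 (H × H))) : Set (WithLp 2 (H × H))))
    (hLβ : L ≤ bdryW A A') :
    ((LowerSemiFredholmOp A ∧ UpperSemiFredholmOp A') →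
      (FredholmOp (realization A A' L) ↔
        FredholmPairIn (bdryW A A') L (cauchyW A A'))) ∧
    ((Function.Injective A.toFun ∧
        IsClosed ((LinearMap.range A.toFun : Submodule ℂ H) : Set H) ∧
        LinearMap.range A'.toFun = ⊤) →
      (Function.Bijective (realization A A' L).toFun ↔
        TransversalPairIn (bdryW A A') L (cauchyW A A'))) := by
  constructor
  · rintro ⟨⟨hAranCl, hAker⟩, hA'ranCl, hA'coker⟩
    have h1 := closed_range_realization_iff hAgraph hA'graph hle hLβ hA'ranCl
    have h2 := fd_ker_realization_iff hAgraph hA'graph hle hLβ hAker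
    have h3 := fd_coker_realization_iff hAgraph hA'graph hle hLβ hA'coker
    constructor
    · rintro ⟨c1, c2, c3⟩
      exact ⟨h1.mp c1, h2.mp c2, h3.mp c3⟩
    · rintro ⟨c1, c2, c3⟩
      exact ⟨h1.mpr c1, h2.mpr c2, h3.mpr c3⟩
  · rintro ⟨hAinj, hAranCl, hA'surj⟩
    have hinj := ker_realization_eq_bot_iff hAgraph hA'graph hle hLβ hAinj
    have hsurj := range_realization_eq_top_iff hAgraph hA'graph hle hLβ hA'surj
    rw [Function.Bijective, ← LinearMap.ker_eq_bot, ← LinearMap.range_eq_top]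
    exact and_congr hinj hsurj
end
end
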